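/- For any n ≥ 4, the number c_{n,i} of cycles of length 2^i in the level-n Schreier graph B_n of the Basilica group is: if n is even, c_{n,i} = 3·2^{n−2i−1} for 1 ≤ i ≤ n/2 − 1 and c_{n,n/2} = 3; if n is odd, c_{n,i} = 3·2^{n−2i−1} for 1 ≤ i ≤ (n−1)/2 − 1, c_{n,(n−1)/2} = 4, and c_{n,(n+1)/2} = 1. -/
import Mathlib


/-- A finite multigraph on a vertex set `V`: a finite edge type together with an
incidence map assigning to each edge its unordered pair of endpoints
(loops and parallel edges are allowed). -/
structure Multigraph (V : Type) where
  /-- the type of edges -/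
  Edge : Type
  /-- the edge type is finite -/
  fintypeEdge : Fintype Edge
  /-- equality of edges is decidable -/
  decEqEdge : DecidableEq Edge
  /-- the unordered pair of endpoints of an edge -/
  inc : Edge → Sym2 V

attribute [instance] Multigraph.fintypeEdge Multigraph.decEqEdge

namespace Multigraph

variable {V : Type} [Fintype V] [DecidableEq V]

/-- The simple graph underlying the spanning subgraph of `G` with edge set `A`:
two distinct vertices are adjacent iff some edge in `A` has them as endpoints. -/
def toSimple (G : Multigraph V) (A : Finset G.Edge) : SimpleGraph V :=
  SimpleGraph.fromRel fun u v => ∃ e ∈ A, G.inc e = s(u, v)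

/-- `G.comps A` is the number `k(A)` of connected components of the spanning
subgraph of `G` with edge set `A`. -/
noncomputable def comps (G : Multigraph V) (A : Finset G.Edge) : ℕ :=
  Nat.card (G.toSimple A).ConnectedComponent

/-- The rank `r(A) = |V| - k(A)` of the spanning subgraph with edge set `A`. -/
noncomputable def rk (G : Multigraph V) (A : Finset G.Edge) : ℕ :=
  Fintype.card V - G.comps A

/-- The nullity `n(A) = |E(A)| - r(A)` of the spanning subgraph with edge set `A`. -/
noncomputable def nullity (G : Multigraph V) (A : Finset G.Edge) : ℕ :=
  A.card - G.rk A

/-- The Tutte polynomial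
`T(G; x, y) = ∑_{A ⊆ E} (x - 1) ^ (r(E) - r(A)) * (y - 1) ^ n(A)`,
as a function of two real variables. -/
noncomputable def tutte (G : Multigraph V) (x y : ℝ) : ℝ :=
  ∑ A ∈ (Finset.univ : Finset G.Edge).powerset,
    (x - 1) ^ (G.rk Finset.univ - G.rk A) * (y - 1) ^ (G.nullity A)

/-- The reliability polynomial `R(G, p)`: the probability that, when each edge is
independently active with probability `p`, every pair of vertices is joined by a
path of active edges (i.e. the spanning subgraph of active edges is connected). -/
noncomputable def reliability (G : Multigraph V) (p : ℝ) : ℝ :=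
  ∑ A ∈ (Finset.univ : Finset G.Edge).powerset,
    if G.comps A = 1 then p ^ A.card * (1 - p) ^ (Fintype.card G.Edge - A.card) else 0

/-- The complexity `τ(G)`: the number of spanning subtrees of `G`, i.e. spanning
subgraphs which are connected and have `|V| - 1` edges. -/
noncomputable def treeCount (G : Multigraph V) : ℕ :=
  Nat.card {A : Finset G.Edge // G.comps A = 1 ∧ A.card + 1 = Fintype.card V}

/-- The number of connected spanning subgraphs of `G`. -/
noncomputable def connCount (G : Multigraph V) : ℕ :=
  Nat.card {A : Finset G.Edge // G.comps A = 1}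

/-- The number of spanning forests of `G`: spanning subgraphs containing no cycle,
i.e. with `|E(A)| = |V| - k(A)` (zero nullity). -/
noncomputable def forestCount (G : Multigraph V) : ℕ :=
  Nat.card {A : Finset G.Edge // A.card + G.comps A = Fintype.card V}

/-- `σ` is an orientation of `G` if it assigns to every edge an ordered pair of
vertices whose underlying unordered pair is the pair of endpoints of the edge. -/
def IsOrientation (G : Multigraph V) (σ : G.Edge → V × V) : Prop :=
  ∀ e, s((σ e).1, (σ e).2) = G.inc e

/-- The number of acyclic orientations of `G`: orientations admitting no directed
cycle. -/
noncomputable def acyclicOrientationCount (G : Multigraph V) : ℕ :=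
  Nat.card {σ : G.Edge → V × V //
    G.IsOrientation σ ∧ ∀ v : V, ¬ Relation.TransGen (fun u w => ∃ e, σ e = (u, w)) v v}

/-- A proper coloring of `G`: the two endpoints of every edge receive distinct
colors. -/
def ProperColoring (G : Multigraph V) {α : Type} (c : V → α) : Prop :=
  ∀ e, ¬ (Sym2.map c (G.inc e)).IsDiag

/-- The number of proper colorings of `G` with `k` colors (the value `χ(G, k)` of
the chromatic polynomial at the natural number `k`). -/
noncomputable def chromCount (G : Multigraph V) (k : ℕ) : ℕ :=
  Nat.card {c : V → Fin k // G.ProperColoring c}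

end Multigraph

mutual
  /-- The generator `a = e(b, id)` of the Basilica group, acting on the `n`-th
  level of the binary rooted tree: `a(1w) = 1w` and `a(0w) = 0 b(w)`. -/
  def basA : (n : ℕ) → (Fin n → Bool) → (Fin n → Bool)
    | 0, v => v
    | n + 1, v =>
      match v 0 with
      | true => v
      | false => Fin.cons false (basB n (Fin.tail v))

  /-- The generator `b = ε(a, id)` of the Basilica group, acting on the `n`-th
  level of the binary rooted tree: `b(1w) = 0w` and `b(0w) = 1 a(w)`. -/
  def basB : (n : ℕ) → (Fin n → Bool) → (Fin n → Bool)
    | 0, v => v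
    | n + 1, v =>
      match v 0 with
      | true => Fin.cons false (Fin.tail v)
      | false => Fin.cons true (basA n (Fin.tail v))
end

/-- The generator of the Basilica group indexed by a boolean tag. -/
def basGen (n : ℕ) : Bool → (Fin n → Bool) → (Fin n → Bool)
  | true => basA n
  | false => basB n

/-- The level-`n` Schreier graph `B_n` of the Basilica group: vertices are the
binary words of length `n`, and for each generator `s ∈ {a, b}` and each vertex
`v` there is one edge joining `v` and `s(v)` (a loop when `s(v) = v`). -/
def basilica (n : ℕ) : Multigraph (Fin n → Bool) where
  Edge := Bool × (Fin n → Bool)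
  fintypeEdge := inferInstance
  decEqEdge := inferInstance
  inc := fun e => s(e.2, basGen n e.1 e.2)

/-- The orbit of `v` under iteration of `f`. -/
def orbit {α : Type} (f : α → α) (v : α) : Set α := {w | ∃ k : ℕ, f^[k] v = w}

/-- The number of cycles of length `2^i` in the level-`n` Schreier graph `B_n` of
the Basilica group: each cycle of `B_n` consists of the edges of one orbit (of
size at least two) of one of the two generators, so this is the number of orbits
of size `2^i` of the generator `a` plus the number of orbits of size `2^i` of the
generator `b`. -/
noncomputable def basCycleCount (n i : ℕ) : ℕ :=
  Nat.card {O : Set (Fin n → Bool) // (∃ v, O = orbit (basA n) v) ∧ Nat.card O = 2 ^ i} +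
  Nat.card {O : Set (Fin n → Bool) // (∃ v, O = orbit (basB n) v) ∧ Nat.card O = 2 ^ i}

section OrbitAux

variable {α β : Type} {f : α → α} {v w : α}

lemma mem_orbit_self (f : α → α) (v : α) : v ∈ orbit f v := ⟨0, rfl⟩

lemma orbit_map (g : α → β) (f₁ : α → α) (f₂ : β → β)
    (h : ∀ x, g (f₁ x) = f₂ (g x)) (v : α) : orbit f₂ (g v) = g '' orbit f₁ v := by
  have key : ∀ k, f₂^[k] (g v) = g (f₁^[k] v) := by
    intro k
    induction k with
    | zero => rfl
    | succ k ih => rw [Function.iterate_succ_apply', Function.iterate_succ_apply', ih, h]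
  ext x
  constructor
  · rintro ⟨k, rfl⟩; exact ⟨f₁^[k] v, ⟨k, rfl⟩, (key k).symm⟩
  · rintro ⟨y, ⟨k, rfl⟩, rfl⟩; exact ⟨k, key k⟩

lemma exists_period [Finite α] (hf : Function.Injective f) (v : α) :
    ∃ m, 0 < m ∧ f^[m] v = v := by
  have : ¬ Function.Injective (fun k : ℕ => f^[k] v) := by
    intro hinj
    exact Set.infinite_range_of_injective hinj (Set.toFinite _)
  rw [Function.not_injective_iff] at this
  obtain ⟨i, j, hij, hne⟩ := this
  rcases Nat.lt_or_ge i j with h | h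
  · refine ⟨j - i, by omega, ?_⟩
    have : f^[i] (f^[j-i] v) = f^[i] v := by
      rw [← Function.iterate_add_apply]
      have : i + (j - i) = j := by omega
      rw [this, hij]
    exact (Function.Injective.iterate hf i) this
  · have h' : j < i := by omega
    refine ⟨i - j, by omega, ?_⟩
    have : f^[j] (f^[i-j] v) = f^[j] v := by
      rw [← Function.iterate_add_apply]
      have : j + (i - j) = i := by omega
      rw [this, ← hij]
    exact (Function.Injective.iterate hf j) this

lemma orbit_apply [Finite α] (hf : Function.Injective f) (v : α) :
    orbit f (f v) = orbit f v := by
  apply Set.eq_of_subset_of_subset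
  · rintro x ⟨k, rfl⟩
    exact ⟨k + 1, by rw [Function.iterate_succ_apply]⟩
  · rintro x ⟨k, rfl⟩
    obtain ⟨m, hm, hmv⟩ := exists_period hf v
    refine ⟨k + (m - 1), ?_⟩
    have h1 : f^[k + (m-1)] (f v) = f^[k + (m-1) + 1] v := by
      rw [← Function.iterate_succ_apply]
    have h2 : k + (m - 1) + 1 = k + m := by omega
    rw [h1, h2, Function.iterate_add_apply, hmv]

lemma image_orbit [Finite α] (hf : Function.Injective f) (v : α) :
    f '' orbit f v = orbit f v := by
  rw [← orbit_map f f f (fun _ => rfl) v, orbit_apply hf]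

lemma orbit_fixed (h : f v = v) : orbit f v = {v} := by
  apply Set.eq_of_subset_of_subset
  · rintro x ⟨k, rfl⟩
    have : ∀ k, f^[k] v = v := by
      intro k; induction k with
      | zero => rfl
      | succ k ih => rw [Function.iterate_succ_apply', ih, h]
    simp [this k]
  · intro x hx
    rw [Set.mem_singleton_iff] at hx
    subst hx
    exact mem_orbit_self f _

lemma ncard_orbit_eq_one_iff [Finite α] : (orbit f v).ncard = 1 ↔ f v = v := by
  constructor
  · intro h
    obtain ⟨a, ha⟩ := Set.ncard_eq_one.mp h
    have hv : v = a := by have := mem_orbit_self f v; rwa [ha] at this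
    have hfv : f v ∈ orbit f v := ⟨1, rfl⟩
    rw [ha, ← hv] at hfv
    exact hfv
  · intro h; rw [orbit_fixed h]; simp

lemma orbit_sq (f : α → α) (v : α) :
    orbit f v = orbit (f ∘ f) v ∪ f '' orbit (f ∘ f) v := by
  have hit : ∀ j : ℕ, (f ∘ f)^[j] v = f^[2*j] v := by
    intro j
    have h2 : f ∘ f = f^[2] := by
      ext x; simp [Function.iterate_succ_apply']
    rw [h2, ← Function.iterate_mul, Nat.mul_comm]
  ext x
  constructor
  · rintro ⟨k, rfl⟩
    rcases Nat.even_or_odd k with ⟨j, hj⟩ | ⟨j, hj⟩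
    · left; exact ⟨j, by rw [hit j]; congr 1; omega⟩
    · right
      refine ⟨(f∘f)^[j] v, ⟨j, rfl⟩, ?_⟩
      rw [hit j, ← Function.iterate_succ_apply' f (2*j) v]
      congr 1; omega
  · rintro (⟨j, rfl⟩ | ⟨y, ⟨j, rfl⟩, rfl⟩)
    · exact ⟨2*j, (hit j).symm⟩
    · refine ⟨2*j+1, ?_⟩
      rw [Function.iterate_succ_apply' f (2*j) v, hit j]

/-- number of orbits of `f` of cardinality `2^0 = 1` equals the number of fixed points -/
lemma card_orbits_pow_zero [Finite α] (f : α → α) :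
    Nat.card {O : Set α // (∃ v, O = orbit f v) ∧ Nat.card O = 2 ^ 0} =
      Nat.card {v : α // f v = v} := by
  have hcard : ∀ p : {v : α // f v = v}, Nat.card ↥(orbit f p.1) = 2 ^ 0 := by
    intro p
    rw [Nat.card_coe_set_eq, ncard_orbit_eq_one_iff.mpr p.2, pow_zero]
  refine (Nat.card_eq_of_bijective
    (fun p => ⟨orbit f p.1, ⟨p.1, rfl⟩, hcard p⟩) ⟨?_, ?_⟩).symm
  · intro u v huv
    have h1 := congrArg Subtype.val huv
    simp only at h1
    rw [orbit_fixed u.2, orbit_fixed v.2, Set.singleton_eq_singleton_iff] at h1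
    exact Subtype.ext h1
  · rintro ⟨O, ⟨v, rfl⟩, h1⟩
    rw [pow_zero, Nat.card_coe_set_eq] at h1
    have hfv : f v = v := ncard_orbit_eq_one_iff.mp h1
    exact ⟨⟨v, hfv⟩, rfl⟩

end OrbitAux

-- ## basic lemmas about the generators

lemma basA_of_true {n : ℕ} {v : Fin (n+1) → Bool} (h : v 0 = true) : basA (n+1) v = v := by
  unfold basA; rw [h]

lemma basA_of_false {n : ℕ} {v : Fin (n+1) → Bool} (h : v 0 = false) :
    basA (n+1) v = Fin.cons false (basB n (Fin.tail v)) := by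
  unfold basA; rw [h]

lemma basB_of_true {n : ℕ} {v : Fin (n+1) → Bool} (h : v 0 = true) :
    basB (n+1) v = Fin.cons false (Fin.tail v) := by
  unfold basB; rw [h]

lemma basB_of_false {n : ℕ} {v : Fin (n+1) → Bool} (h : v 0 = false) :
    basB (n+1) v = Fin.cons true (basA n (Fin.tail v)) := by
  unfold basB; rw [h]

lemma basA_cons_false {n : ℕ} (w : Fin n → Bool) :
    basA (n+1) (Fin.cons false w) = Fin.cons false (basB n w) := by
  rw [basA_of_false (by simp), Fin.tail_cons]

lemma basB_cons_false {n : ℕ} (w : Fin n → Bool) :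
    basB (n+1) (Fin.cons false w) = Fin.cons true (basA n w) := by
  rw [basB_of_false (by simp), Fin.tail_cons]

lemma basB_cons_true {n : ℕ} (w : Fin n → Bool) :
    basB (n+1) (Fin.cons true w) = Fin.cons false w := by
  rw [basB_of_true (by simp), Fin.tail_cons]

lemma basA_apply_zero {n : ℕ} (v : Fin (n+1) → Bool) : basA (n+1) v 0 = v 0 := by
  cases h : v 0
  · rw [basA_of_false h]; simp [h]
  · rw [basA_of_true h]; exact h

lemma basB_apply_zero {n : ℕ} (v : Fin (n+1) → Bool) : basB (n+1) v 0 = !(v 0) := by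
  cases h : v 0
  · rw [basB_of_false h]; simp
  · rw [basB_of_true h]; simp

lemma bas_inj : ∀ n : ℕ, Function.Injective (basA n) ∧ Function.Injective (basB n) := by
  intro n
  induction n with
  | zero => exact ⟨fun u v h => h, fun u v h => h⟩
  | succ n ih =>
    constructor
    · intro u v h
      have h0 : u 0 = v 0 := by
        rw [← basA_apply_zero u, ← basA_apply_zero v, h]
      cases hu : u 0
      · have hv : v 0 = false := by rw [← h0, hu]
        rw [basA_of_false hu, basA_of_false hv] at h
        have := ih.2 (Fin.cons_right_injective _ h)
        rw [← Fin.cons_self_tail u, ← Fin.cons_self_tail v, hu, hv, this]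
      · have hv : v 0 = true := by rw [← h0, hu]
        rw [basA_of_true hu, basA_of_true hv] at h; exact h
    · intro u v h
      have h0 : u 0 = v 0 := by
        have := congrArg (fun w => w 0) h
        simp only [basB_apply_zero] at this
        exact Bool.not_inj this
      cases hu : u 0
      · have hv : v 0 = false := by rw [← h0, hu]
        rw [basB_of_false hu, basB_of_false hv] at h
        have := ih.1 (Fin.cons_right_injective _ h)
        rw [← Fin.cons_self_tail u, ← Fin.cons_self_tail v, hu, hv, this]
      · have hv : v 0 = true := by rw [← h0, hu]
        rw [basB_of_true hu, basB_of_true hv] at h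
        have := Fin.cons_right_injective _ h
        rw [← Fin.cons_self_tail u, ← Fin.cons_self_tail v, hu, hv, this]

-- ## orbit structure

lemma orbitA_succ {n : ℕ} (w : Fin n → Bool) :
    orbit (basA (n+1)) (Fin.cons false w) = Fin.cons false '' orbit (basB n) w :=
  orbit_map (Fin.cons false) (basB n) (basA (n+1))
    (fun x => (basA_cons_false x).symm) w

lemma orbitB_succ {n : ℕ} (w : Fin n → Bool) :
    orbit (basB (n+1)) (Fin.cons false w) =
      Fin.cons false '' orbit (basA n) w ∪ Fin.cons true '' orbit (basA n) w := by
  have hsq : ∀ x : Fin n → Bool,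
      Fin.cons false (basA n x) = (basB (n+1) ∘ basB (n+1)) (Fin.cons false x) := by
    intro x
    simp only [Function.comp_apply, basB_cons_false, basB_cons_true]
  rw [orbit_sq (basB (n+1)) (Fin.cons false w)]
  rw [← orbit_map (Fin.cons false) (basA n) (basB (n+1) ∘ basB (n+1)) hsq w]
  congr 1
  rw [orbit_map (Fin.cons false) (basA n) (basB (n+1) ∘ basB (n+1)) hsq w]
  rw [Set.image_image]
  have : ∀ x : Fin n → Bool, basB (n+1) (Fin.cons false x) = Fin.cons true (basA n x) :=
    basB_cons_false
  calc (fun x => basB (n+1) (Fin.cons false x)) '' orbit (basA n) w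
      = (fun x => Fin.cons true (basA n x)) '' orbit (basA n) w := by
        apply Set.image_congr; intro x _; exact this x
    _ = Fin.cons true '' (basA n '' orbit (basA n) w) := by rw [Set.image_image]
    _ = Fin.cons true '' orbit (basA n) w := by rw [image_orbit (bas_inj n).1]

-- ## the counting quantities

noncomputable def NaC (n i : ℕ) : ℕ :=
  Nat.card {O : Set (Fin n → Bool) // (∃ v, O = orbit (basA n) v) ∧ Nat.card O = 2 ^ i}

noncomputable def NbC (n i : ℕ) : ℕ :=
  Nat.card {O : Set (Fin n → Bool) // (∃ v, O = orbit (basB n) v) ∧ Nat.card O = 2 ^ i}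

lemma consInj {n : ℕ} (b : Bool) :
    Function.Injective (fun w : Fin n → Bool => (Fin.cons b w : Fin (n+1) → Bool)) :=
  fun _ _ h => Fin.cons_right_injective (α := fun _ : Fin (n+1) => Bool) b h

lemma card_cons_image {n : ℕ} (b : Bool) (O : Set (Fin n → Bool)) :
    Nat.card ↥(Fin.cons b '' O : Set (Fin (n+1) → Bool)) = Nat.card ↥O := by
  rw [Nat.card_coe_set_eq, Nat.card_coe_set_eq]
  exact Set.ncard_image_of_injective O (consInj b)

lemma NA_succ (n i : ℕ) : NaC (n+1) (i+1) = NbC n (i+1) := by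
  have horb : ∀ p : {O : Set (Fin n → Bool) //
      (∃ v, O = orbit (basB n) v) ∧ Nat.card O = 2 ^ (i+1)},
      (∃ v, (Fin.cons false '' p.1 : Set (Fin (n+1) → Bool)) = orbit (basA (n+1)) v) ∧
        Nat.card ↥(Fin.cons false '' p.1 : Set (Fin (n+1) → Bool)) = 2 ^ (i+1) := by
    rintro ⟨O, ⟨v, rfl⟩, hc⟩
    exact ⟨⟨Fin.cons false v, (orbitA_succ v).symm⟩, by rw [card_cons_image]; exact hc⟩
  refine (Nat.card_eq_of_bijective (fun p => ⟨Fin.cons false '' p.1, horb p⟩) ⟨?_, ?_⟩).symm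
  · intro u v huv
    have h1 := congrArg Subtype.val huv
    simp only at h1
    exact Subtype.ext (Set.image_injective.mpr (consInj false) h1)
  · rintro ⟨O, ⟨v, rfl⟩, hc⟩
    have hv0 : v 0 = false := by
      by_contra h
      have hv : v 0 = true := by revert h; cases v 0 <;> simp
      rw [orbit_fixed (basA_of_true hv), Nat.card_coe_set_eq, Set.ncard_singleton] at hc
      have : 1 < 2 ^ (i+1) := Nat.one_lt_two_pow (by omega)
      omega
    have hv : v = Fin.cons false (Fin.tail v) := by
      rw [← hv0, Fin.cons_self_tail]
    have hO : orbit (basA (n+1)) v = Fin.cons false '' orbit (basB n) (Fin.tail v) := by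
      conv_lhs => rw [hv]
      exact orbitA_succ (Fin.tail v)
    refine ⟨⟨orbit (basB n) (Fin.tail v), ⟨Fin.tail v, rfl⟩, ?_⟩, ?_⟩
    · rw [← card_cons_image false, ← hO]; exact hc
    · exact Subtype.ext hO.symm

lemma disj_cons_images {n : ℕ} (O₁ O₂ : Set (Fin n → Bool)) :
    Disjoint (Fin.cons false '' O₁ : Set (Fin (n+1) → Bool)) (Fin.cons true '' O₂) := by
  rw [Set.disjoint_left]
  rintro x ⟨y, _, rfl⟩ ⟨z, _, hz⟩
  have := congrFun hz 0
  simp at this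

lemma card_union_cons {n : ℕ} (O : Set (Fin n → Bool)) :
    Nat.card ↥((Fin.cons false '' O ∪ Fin.cons true '' O : Set (Fin (n+1) → Bool))) =
      2 * Nat.card ↥O := by
  rw [Nat.card_coe_set_eq,
    Set.ncard_union_eq (disj_cons_images O O) (Set.toFinite _) (Set.toFinite _)]
  rw [← Nat.card_coe_set_eq, ← Nat.card_coe_set_eq, card_cons_image, card_cons_image]
  omega

lemma NB_succ (n i : ℕ) : NbC (n+1) (i+1) = NaC n i := by
  have horb : ∀ p : {O : Set (Fin n → Bool) //
      (∃ v, O = orbit (basA n) v) ∧ Nat.card O = 2 ^ i},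
      (∃ v, (Fin.cons false '' p.1 ∪ Fin.cons true '' p.1 : Set (Fin (n+1) → Bool)) =
          orbit (basB (n+1)) v) ∧
        Nat.card ↥(Fin.cons false '' p.1 ∪ Fin.cons true '' p.1 :
          Set (Fin (n+1) → Bool)) = 2 ^ (i+1) := by
    rintro ⟨O, ⟨v, rfl⟩, hc⟩
    refine ⟨⟨Fin.cons false v, (orbitB_succ v).symm⟩, ?_⟩
    rw [card_union_cons, hc, pow_succ, Nat.mul_comm]
  refine (Nat.card_eq_of_bijective
    (fun p => ⟨Fin.cons false '' p.1 ∪ Fin.cons true '' p.1, horb p⟩) ⟨?_, ?_⟩).symm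
  · intro u v huv
    have h1 := congrArg Subtype.val huv
    simp only at h1
    refine Subtype.ext ?_
    have key : ∀ O₁ O₂ : Set (Fin n → Bool),
        (Fin.cons false '' O₁ ∪ Fin.cons true '' O₁ : Set (Fin (n+1) → Bool)) =
          Fin.cons false '' O₂ ∪ Fin.cons true '' O₂ → O₁ ⊆ O₂ := by
      intro O₁ O₂ h x hx
      have hmem : (Fin.cons false x : Fin (n+1) → Bool) ∈
          (Fin.cons false '' O₂ ∪ Fin.cons true '' O₂ : Set (Fin (n+1) → Bool)) := by
        rw [← h]; exact Or.inl ⟨x, hx, rfl⟩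
      rcases hmem with ⟨y, hy, hyx⟩ | ⟨y, _, hyx⟩
      · rwa [← consInj false hyx]
      · have := congrFun hyx 0
        simp at this
    exact Set.eq_of_subset_of_subset (key _ _ h1) (key _ _ h1.symm)
  · rintro ⟨O, ⟨v, rfl⟩, hc⟩
    obtain ⟨w, hw0, hworb⟩ : ∃ w, w 0 = false ∧ orbit (basB (n+1)) w = orbit (basB (n+1)) v := by
      cases hv : v 0
      · exact ⟨v, hv, rfl⟩
      · refine ⟨basB (n+1) v, ?_, orbit_apply (bas_inj (n+1)).2 v⟩
        rw [basB_apply_zero, hv]; rfl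
    have hw : w = Fin.cons false (Fin.tail w) := by rw [← hw0, Fin.cons_self_tail]
    have hO : orbit (basB (n+1)) v =
        Fin.cons false '' orbit (basA n) (Fin.tail w) ∪
          Fin.cons true '' orbit (basA n) (Fin.tail w) := by
      rw [← hworb]
      conv_lhs => rw [hw]
      exact orbitB_succ (Fin.tail w)
    have hcard : Nat.card ↥(orbit (basA n) (Fin.tail w)) = 2 ^ i := by
      have h2 : 2 * Nat.card ↥(orbit (basA n) (Fin.tail w)) = 2 ^ (i+1) := by
        rw [← card_union_cons, ← hO, hc]
      have : (2 : ℕ) ^ (i+1) = 2 ^ i * 2 := pow_succ 2 i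
      omega
    exact ⟨⟨orbit (basA n) (Fin.tail w), ⟨Fin.tail w, rfl⟩, hcard⟩, Subtype.ext hO.symm⟩

-- ## fixed point counts

def fval : ℕ → ℕ
  | 0 => 1
  | 1 => 2
  | (m+2) => 2 ^ (m+1)

lemma NaC_zero : ∀ n, NaC n 0 = fval n := by
  intro n
  rw [NaC, card_orbits_pow_zero (basA n)]
  match n with
  | 0 =>
    have h : ∀ v : Fin 0 → Bool, basA 0 v = v := fun _ => rfl
    rw [Nat.card_congr (Equiv.subtypeUnivEquiv h)]
    simp [Nat.card_eq_fintype_card, fval]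
  | 1 =>
    have h : ∀ v : Fin 1 → Bool, basA 1 v = v := by
      intro v
      cases hv : v 0
      · rw [basA_of_false hv]
        show Fin.cons false (Fin.tail v) = v
        rw [← hv, Fin.cons_self_tail]
      · exact basA_of_true hv
    rw [Nat.card_congr (Equiv.subtypeUnivEquiv h)]
    simp [Nat.card_eq_fintype_card, fval]
  | (m+2) =>
    have hiff : ∀ v : Fin (m+2) → Bool, basA (m+2) v = v ↔ v 0 = true := by
      intro v
      constructor
      · intro h
        by_contra hne
        have hv : v 0 = false := by revert hne; cases v 0 <;> simp
        rw [basA_of_false hv] at h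
        have htail := congrArg Fin.tail h
        rw [Fin.tail_cons] at htail
        have := congrFun htail 0
        rw [basB_apply_zero] at this
        revert this; cases Fin.tail v 0 <;> simp
      · exact basA_of_true
    have e1 : {v : Fin (m+2) → Bool // basA (m+2) v = v} ≃
        {v : Fin (m+2) → Bool // v 0 = true} := Equiv.subtypeEquivRight hiff
    have e2 : {v : Fin (m+2) → Bool // v 0 = true} ≃ (Fin (m+1) → Bool) :=
      { toFun := fun p => Fin.tail p.1
        invFun := fun w => ⟨Fin.cons true w, by simp⟩
        left_inv := by
          rintro ⟨v, hv⟩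
          apply Subtype.ext
          show Fin.cons true (Fin.tail v) = v
          rw [← hv, Fin.cons_self_tail]
        right_inv := fun w => by simp }
    rw [Nat.card_congr (e1.trans e2)]
    show Nat.card (Fin (m+1) → Bool) = fval (m+2)
    simp [Nat.card_eq_fintype_card, fval]

lemma NbC_zero (n : ℕ) : NbC (n+1) 0 = 0 := by
  rw [NbC, card_orbits_pow_zero (basB (n+1))]
  haveI : IsEmpty {v : Fin (n+1) → Bool // basB (n+1) v = v} := by
    refine ⟨?_⟩
    rintro ⟨v, hv⟩
    have := congrFun hv 0
    rw [basB_apply_zero] at this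
    revert this; cases v 0 <;> simp
  exact Nat.card_of_isEmpty

lemma NaC_zero_level (i : ℕ) : NaC 0 (i+1) = 0 := by
  rw [NaC]
  haveI : IsEmpty {O : Set (Fin 0 → Bool) //
      (∃ v, O = orbit (basA 0) v) ∧ Nat.card O = 2 ^ (i+1)} := by
    refine ⟨?_⟩
    rintro ⟨O, ⟨v, rfl⟩, hc⟩
    have hfix : basA 0 v = v := rfl
    rw [orbit_fixed hfix, Nat.card_coe_set_eq, Set.ncard_singleton] at hc
    have : 1 < 2 ^ (i+1) := Nat.one_lt_two_pow (by omega)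
    omega
  exact Nat.card_of_isEmpty

-- ## the master formula

lemma NaC_formula (n : ℕ) : ∀ i, NaC n (i+1) =
    if 2*(i+1) ≤ n then fval (n - 2*(i+1)) else 0 := by
  induction n using Nat.twoStepInduction with
  | zero => intro i; rw [NaC_zero_level]; simp
  | one =>
    intro i
    have h01 : NaC 1 (i+1) = NbC 0 (i+1) := NA_succ 0 i
    rw [h01, if_neg (by omega)]
    haveI : IsEmpty {O : Set (Fin 0 → Bool) //
        (∃ v, O = orbit (basB 0) v) ∧ Nat.card O = 2 ^ (i+1)} := by
      refine ⟨?_⟩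
      rintro ⟨O, ⟨v, rfl⟩, hc⟩
      have hfix : basB 0 v = v := rfl
      rw [orbit_fixed hfix, Nat.card_coe_set_eq, Set.ncard_singleton] at hc
      have : 1 < 2 ^ (i+1) := Nat.one_lt_two_pow (by omega)
      omega
    exact Nat.card_of_isEmpty
  | more n ih _ =>
    intro i
    rw [NA_succ, NB_succ]
    match i with
    | 0 =>
      rw [NaC_zero]
      have h1 : 2*(0+1) ≤ n + 2 := by omega
      rw [if_pos h1]
      congr 1 <;> omega
    | (j+1) =>
      rw [ih j]
      have heq : n + 2 - 2*(j+1+1) = n - 2*(j+1) := by omega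
      by_cases h : 2*(j+1) ≤ n
      · rw [if_pos h, if_pos (by omega), heq]
      · rw [if_neg h, if_neg (by omega)]

lemma NbC_formula (n i : ℕ) : NbC (n+1) (i+1) =
    if 2*i+1 ≤ n+1 then fval (n+1 - (2*i+1)) else 0 := by
  rw [NB_succ]
  match i with
  | 0 =>
    rw [NaC_zero, if_pos (by omega)]
    congr 1 <;> omega
  | (j+1) =>
    rw [NaC_formula n j]
    have heq : n - 2*(j+1) = n + 1 - (2*(j+1)+1) := by omega
    by_cases h : 2*(j+1) ≤ n
    · rw [if_pos h, if_pos (by omega), heq]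
    · rw [if_neg h, if_neg (by omega)]


lemma count_split (n i : ℕ) (hn : 1 ≤ n) (hi : 1 ≤ i) :
    basCycleCount n i =
      (if 2*i ≤ n then fval (n - 2*i) else 0) +
      (if 2*i ≤ n + 1 then fval (n + 1 - 2*i) else 0) := by
  obtain ⟨m, rfl⟩ : ∃ m, n = m + 1 := ⟨n-1, by omega⟩
  obtain ⟨j, rfl⟩ : ∃ j, i = j + 1 := ⟨i-1, by omega⟩
  show NaC (m+1) (j+1) + NbC (m+1) (j+1) = _
  rw [NaC_formula (m+1) j, NbC_formula m j]
  congr 1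
  by_cases h : 2*j+1 ≤ m+1
  · rw [if_pos h, if_pos (by omega)]
    congr 1
    omega
  · rw [if_neg h, if_neg (by omega)]

lemma count_generic (n i : ℕ) (hi : 1 ≤ i) (h : 2*i + 2 ≤ n) :
    basCycleCount n i = 3 * 2 ^ (n - 2*i - 1) := by
  rw [count_split n i (by omega) hi, if_pos (by omega), if_pos (by omega)]
  obtain ⟨e, he2⟩ : ∃ e, n - 2*i = e + 2 := ⟨n - 2*i - 2, by omega⟩
  have hv1 : fval (n - 2*i) = 2^(e+1) := by rw [he2]; rfl
  have hv2 : fval (n + 1 - 2*i) = 2^(e+2) := by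
    rw [show n + 1 - 2*i = e + 3 by omega]; rfl
  rw [hv1, hv2, show n - 2*i - 1 = e + 1 by omega, pow_succ 2 (e+1)]
  ring


/-- For any `n ≥ 4`, the number `c_{n,i}` of cycles of length
`2^i` in the level-`n` Schreier graph `B_n` of the Basilica group is: if `n` is
even, `c_{n,i} = 3·2^(n-2i-1)` for `1 ≤ i ≤ n/2 - 1` and `c_{n,n/2} = 3`; if `n`
is odd, `c_{n,i} = 3·2^(n-2i-1)` for `1 ≤ i ≤ (n-1)/2 - 1`, `c_{n,(n-1)/2} = 4`
and `c_{n,(n+1)/2} = 1`. -/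
theorem basCycleCount_eq (n : ℕ) (hn : 4 ≤ n) :
    (Even n →
      (∀ i, 1 ≤ i → i ≤ n / 2 - 1 → basCycleCount n i = 3 * 2 ^ (n - 2 * i - 1)) ∧
        basCycleCount n (n / 2) = 3) ∧
    (Odd n →
      (∀ i, 1 ≤ i → i ≤ (n - 1) / 2 - 1 →
          basCycleCount n i = 3 * 2 ^ (n - 2 * i - 1)) ∧
        basCycleCount n ((n - 1) / 2) = 4 ∧
        basCycleCount n ((n + 1) / 2) = 1) := by
  constructor
  · intro he
    obtain ⟨k, hk⟩ := he
    have hk2 : n / 2 = k := by omega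
    constructor
    · intro i hi hile
      exact count_generic n i hi (by omega)
    · rw [count_split n (n/2) (by omega) (by omega), if_pos (by omega), if_pos (by omega),
        show n - 2*(n/2) = 0 by omega, show n + 1 - 2*(n/2) = 1 by omega]
      rfl
  · intro ho
    obtain ⟨k, hk⟩ := ho
    have hk1 : (n - 1) / 2 = k := by omega
    have hk2 : (n + 1) / 2 = k + 1 := by omega
    refine ⟨?_, ?_, ?_⟩
    · intro i hi hile
      exact count_generic n i hi (by omega)
    · rw [count_split n ((n-1)/2) (by omega) (by omega), if_pos (by omega), if_pos (by omega),
        show n - 2*((n-1)/2) = 1 by omega, show n + 1 - 2*((n-1)/2) = 2 by omega]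
      rfl
    · rw [count_split n ((n+1)/2) (by omega) (by omega), if_neg (by omega), if_pos (by omega),
        show n + 1 - 2*((n+1)/2) = 0 by omega]
      rfl
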